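/- arXiv:1710.07279 — 6 statements merged into one kernel-verified Lean document; each statement's English description precedes it below -/
import Mathlib

section
/- Let G be a finite group and H ⊆ G a subgroup. Consider the action of G on the left coset space G/H. Assume that (i) for all distinct cosets ω, ω' ∈ G/H there exists g ∈ G whose action swaps ω and ω', and (ii) for all distinct ω, ω' ∈ G/H, every automorphism of the twofold point stabiliser (G_ω)_{ω'} is inner. Then any two subgroups U₁, U₂ ⊆ H that are conjugate in G are already conjugate in H. -/
/-!
If `g` conjugates `U₁` into `U₂` but `g ∉ H`, then `U₁` fixes the two distinct points `H` and
`g⁻¹H`. An element `s` swapping them normalises the twofold point stabiliser `D`, and since the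
automorphism of `D` induced by `s` is inner, `s` agrees on `D` with some `c ∈ D`. Then
`z = s⁻¹c` centralises `D ⊇ U₁`, so `gz` conjugates `U₁` to `U₂` as well, and `gz` fixes the
point `H`, i.e. lies in `H`.
-/

open MulAction

namespace Subgroup

variable {G : Type*} [Group G]

theorem map_conj_eq_self_of_mem_centralizer {U : Subgroup G} {z : G}
    (hz : z ∈ centralizer (U : Set G)) : U.map (MulAut.conj z).toMonoidHom = U := by
  have hfix : ∀ u ∈ U, MulAut.conj z u = u := fun u hu ↦ by
    rw [MulAut.conj_apply, ← mem_centralizer_iff.mp hz u hu, mul_inv_cancel_right]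
  ext x
  constructor
  · rintro ⟨u, hu, rfl⟩
    simpa [hfix u hu] using hu
  · exact fun hx ↦ ⟨x, hx, hfix x hx⟩

theorem map_conj_mul_of_mem_centralizer {U : Subgroup G} (g : G) {z : G}
    (hz : z ∈ centralizer (U : Set G)) :
    U.map (MulAut.conj (g * z)).toMonoidHom = U.map (MulAut.conj g).toMonoidHom := by
  calc U.map (MulAut.conj (g * z)).toMonoidHom
      = (U.map (MulAut.conj z).toMonoidHom).map (MulAut.conj g).toMonoidHom := by
        rw [map_map]
        congr 1
        ext x
        simp [mul_assoc]
    _ = U.map (MulAut.conj g).toMonoidHom := by rw [map_conj_eq_self_of_mem_centralizer hz]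

theorem exists_mem_centralizer_mul_mem_of_mem_normalizer {D : Subgroup G}
    (hinner : ∀ f : D ≃* D, ∃ c : D, ∀ x, f x = c * x * c⁻¹) {s : G}
    (hs : s ∈ normalizer (D : Set G)) : ∃ z ∈ centralizer (D : Set G), s * z ∈ D := by
  obtain ⟨c, hc⟩ := hinner (D.normalizerMonoidHom ⟨s, hs⟩)
  refine ⟨s⁻¹ * c, ?_, by simp⟩
  rw [mem_centralizer_iff]
  intro x hx
  have hsx : s * x * s⁻¹ = c * x * (c : G)⁻¹ := by
    simpa using congrArg Subtype.val (hc ⟨x, hx⟩)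
  calc x * (s⁻¹ * c) = s⁻¹ * (s * x * s⁻¹) * c := by group
    _ = s⁻¹ * (c * x * (c : G)⁻¹) * c := by rw [hsx]
    _ = s⁻¹ * c * x := by group

end Subgroup

namespace MulAction

variable {G α : Type*} [Group G] [MulAction G α]

theorem mem_normalizer_stabilizer_inf_of_swap {s : G} {a b : α} (hab : s • a = b)
    (hba : s • b = a) :
    s ∈ Subgroup.normalizer ((stabilizer G a ⊓ stabilizer G b : Subgroup G) : Set G) := by
  rw [Subgroup.mem_normalizer_iff_map_conj_eq,
    Subgroup.map_inf_eq _ _ _ (MulAut.conj s).injective, ← MulEquiv.toMonoidHom_eq_coe,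
    ← stabilizer_smul_eq_stabilizer_map_conj, ← stabilizer_smul_eq_stabilizer_map_conj, hab, hba,
    inf_comm]

theorem le_stabilizer_inv_smul_of_map_conj_le {U : Subgroup G} {g : G} {a : α}
    (hU : U.map (MulAut.conj g).toMonoidHom ≤ stabilizer G a) : U ≤ stabilizer G (g⁻¹ • a) := by
  intro u hu
  have hgu : (g * u * g⁻¹) • a = a := hU ⟨u, hu, rfl⟩
  rw [mem_stabilizer_iff]
  calc u • g⁻¹ • a = g⁻¹ • (g * u * g⁻¹) • a := by simp [mul_smul]
    _ = g⁻¹ • a := by rw [hgu]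

end MulAction

theorem stmt0_general {G : Type*} [Group G] (H : Subgroup G)
    (hswap : ∀ ω ω' : G ⧸ H, ω ≠ ω' → ∃ g : G, g • ω = ω' ∧ g • ω' = ω)
    (hinner : ∀ ω ω' : G ⧸ H, ω ≠ ω' →
      ∀ f : (MulAction.stabilizer G ω ⊓ MulAction.stabilizer G ω' : Subgroup G) ≃*
            (MulAction.stabilizer G ω ⊓ MulAction.stabilizer G ω' : Subgroup G),
        ∃ c : (MulAction.stabilizer G ω ⊓ MulAction.stabilizer G ω' : Subgroup G),
          ∀ x, f x = c * x * c⁻¹)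
    (U₁ U₂ : Subgroup G) (hU₁ : U₁ ≤ H) (hU₂ : U₂ ≤ H)
    (hconj : ∃ g : G, Subgroup.map (MulAut.conj g).toMonoidHom U₁ = U₂) :
    ∃ h ∈ H, Subgroup.map (MulAut.conj h).toMonoidHom U₁ = U₂ := by
  obtain ⟨g, rfl⟩ := hconj
  by_cases hgH : g ∈ H
  · exact ⟨g, hgH, rfl⟩
  set ω₀ : G ⧸ H := ((1 : G) : G ⧸ H)
  have hstab : stabilizer G ω₀ = H := stabilizer_quotient H
  have hne : ω₀ ≠ g⁻¹ • ω₀ := fun h ↦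
    hgH (inv_inv g ▸ H.inv_mem (hstab ▸ mem_stabilizer_iff.mpr h.symm))
  obtain ⟨s, hs₁, hs₂⟩ := hswap _ _ hne
  obtain ⟨z, hz, hsz⟩ := Subgroup.exists_mem_centralizer_mul_mem_of_mem_normalizer
    (hinner _ _ hne) (mem_normalizer_stabilizer_inf_of_swap hs₁ hs₂)
  have hU₁D : U₁ ≤ stabilizer G ω₀ ⊓ stabilizer G (g⁻¹ • ω₀) :=
    le_inf (by rwa [hstab]) (le_stabilizer_inv_smul_of_map_conj_le (by rwa [hstab]))
  refine ⟨g * z, ?_, Subgroup.map_conj_mul_of_mem_centralizer g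
    (Subgroup.centralizer_le hU₁D hz)⟩
  have hz₀ : z • ω₀ = g⁻¹ • ω₀ := by
    rw [← inv_mul_cancel_left s z, mul_smul, mem_stabilizer_iff.mp (Subgroup.mem_inf.mp hsz).1,
      inv_smul_eq_iff, hs₂]
  rw [← hstab, mem_stabilizer_iff, mul_smul, hz₀, smul_inv_smul]

/-- Let G be a finite group and H ⊆ G a subgroup. Consider the action of G on
the left coset space G/H. Assume (i) for all distinct ω, ω' ∈ G/H there is g ∈ G swapping
ω and ω', and (ii) for all distinct ω, ω', every automorphism of the twofold point
stabiliser G_ω ∩ G_{ω'} is inner. Then any two subgroups U₁, U₂ ⊆ H conjugate in G are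
already conjugate in H. -/
theorem stmt0 {G : Type*} [Group G] [Finite G] (H : Subgroup G)
    (hswap : ∀ ω ω' : G ⧸ H, ω ≠ ω' → ∃ g : G, g • ω = ω' ∧ g • ω' = ω)
    (hinner : ∀ ω ω' : G ⧸ H, ω ≠ ω' →
      ∀ f : (MulAction.stabilizer G ω ⊓ MulAction.stabilizer G ω' : Subgroup G) ≃*
            (MulAction.stabilizer G ω ⊓ MulAction.stabilizer G ω' : Subgroup G),
        ∃ c : (MulAction.stabilizer G ω ⊓ MulAction.stabilizer G ω' : Subgroup G),
          ∀ x, f x = c * x * c⁻¹)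
    (U₁ U₂ : Subgroup G) (hU₁ : U₁ ≤ H) (hU₂ : U₂ ≤ H)
    (hconj : ∃ g : G, Subgroup.map (MulAut.conj g).toMonoidHom U₁ = U₂) :
    ∃ h ∈ H, Subgroup.map (MulAut.conj h).toMonoidHom U₁ = U₂ :=
  stmt0_general H hswap hinner U₁ U₂ hU₁ hU₂ hconj
end

section
/- Let k be a field and x₁, …, x₈ ∈ k distinct elements with x₁ + ⋯ + x₈ = 0. If for every size-four subset {i₁,i₂,i₃,i₄} ⊆ {1,…,8} one has x_{i₁}+x_{i₂}+x_{i₃}+x_{i₄} ≠ 0, then no four of the eight points (1 : x_i : x_i² : x_i⁴) ∈ P³(k) are coplanar. -/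
/-- The cofactor `∑ a, y a` is the Schur polynomial of the partition `(1)`, the gap in the
exponents `0, 1, 2, 4`. -/
theorem Matrix.det_of_pow_zero_one_two_four {R : Type*} [CommRing R] (y : Fin 4 → R) :
    (Matrix.of fun a b : Fin 4 => y a ^ (![(0 : ℕ), 1, 2, 4] b)).det =
      (Matrix.vandermonde y).det * ∑ a, y a := by
  simp [Matrix.det_succ_row_zero, Fin.sum_univ_succ, Fin.succAbove]
  ring

theorem stmt5_general {k : Type*} [Field k] (x : Fin 8 → k) (hx : Function.Injective x)
    (h4 : ∀ s : Finset (Fin 8), s.card = 4 → ∑ i ∈ s, x i ≠ 0)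
    (i : Fin 4 → Fin 8) (hi : Function.Injective i) :
    (Matrix.of fun a b : Fin 4 => x (i a) ^ (![(0 : ℕ), 1, 2, 4] b)).det ≠ 0 := by
  rw [Matrix.det_of_pow_zero_one_two_four]
  refine mul_ne_zero (Matrix.det_vandermonde_ne_zero_iff.mpr (hx.comp hi)) ?_
  simpa using h4 (Finset.univ.map ⟨i, hi⟩) (by simp)

/-- x₁,…,x₈ distinct with sum 0, every four of them having nonzero sum.
Then no four of the points (1 : x_i : x_i² : x_i⁴) ∈ P³ are coplanar, i.e. for every
injective choice of four indices, the 4×4 matrix of representatives has nonzero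
determinant. -/
theorem stmt5 {k : Type*} [Field k] (x : Fin 8 → k) (hx : Function.Injective x)
    (hsum : ∑ i, x i = 0)
    (h4 : ∀ s : Finset (Fin 8), s.card = 4 → ∑ i ∈ s, x i ≠ 0)
    (i : Fin 4 → Fin 8) (hi : Function.Injective i) :
    (Matrix.of fun a b : Fin 4 => x (i a) ^ (![(0 : ℕ), 1, 2, 4] b)).det ≠ 0 :=
  stmt5_general x hx h4 i hi
end

section
/- Over an algebraically closed field of characteristic ≠ 2, let D be the determinant of the generic symmetric 4×4 matrix (a_{ij}), viewed as a quartic polynomial in the 10 variables a_{ij} (i ≤ j). A point of the hypersurface D = 0 corresponding to a symmetric matrix M is a singular point of this hypersurface if and only if M has rank at most 2. -/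
/-!
By Jacobi's formula `∂ det A = tr (adj A · ∂A)`, the partial derivative of `D` in the variable
`a_ij` at `M` is `adj(M)_ii` if `i = j` and `adj(M)_ij + adj(M)_ji = 2 adj(M)_ij` if `i < j`
(the variable fills two entries, and `adj M` is symmetric). As `2 ≠ 0`, `M` is a singular point
iff `adj M = 0`. Writing `M = P · diag(d) · Q` with `P`, `Q` invertible, `adj M = 0` iff
`adj (diag d) = 0`, i.e. iff at least two `d_i` vanish, i.e. iff `rank M ≤ 4 - 2`.
-/

open Matrix MvPolynomial Finset

/-- The determinant of the generic symmetric 4×4 matrix, a quartic polynomial in the 10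
variables a_{ij}, i ≤ j. -/
noncomputable def genSymDet (k : Type*) [Field k] :
    MvPolynomial {p : Fin 4 × Fin 4 // p.1 ≤ p.2} k :=
  (Matrix.of fun i j : Fin 4 =>
    if h : i ≤ j then MvPolynomial.X ⟨(i, j), h⟩
    else MvPolynomial.X ⟨(j, i), le_of_not_ge h⟩).det

theorem Finset.forall_exists_mem_ne_iff_one_lt_card {α : Type*} [Nonempty α] (s : Finset α) :
    (∀ a, ∃ b ∈ s, b ≠ a) ↔ 1 < #s := by
  refine ⟨fun h => ?_, fun h => (one_lt_card_iff_nontrivial.1 h).exists_ne⟩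
  obtain ⟨b, hb, -⟩ := h (Classical.arbitrary α)
  obtain ⟨c, hc, hcb⟩ := h b
  exact one_lt_card_iff.2 ⟨b, c, hb, hc, hcb.symm⟩

namespace Matrix

variable {K n : Type*} [Field K] [Fintype n] [DecidableEq n] [Nonempty n]

theorem adjugate_diagonal_eq_zero_iff (d : n → K) :
    adjugate (diagonal d) = 0 ↔ (diagonal d).rank + 2 ≤ Fintype.card n := by
  classical
  have hzeros := forall_exists_mem_ne_iff_one_lt_card {i | d i = 0}
  have hcard := card_filter_add_card_filter_not (s := univ) (fun i => d i = 0)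
  rw [adjugate_diagonal, diagonal_eq_zero, rank_diagonal, Fintype.card_subtype]
  simp only [funext_iff, Pi.zero_apply, prod_eq_zero_iff, mem_erase, mem_univ,
    mem_filter, true_and, and_comm, ne_eq, card_univ] at hzeros hcard ⊢
  rw [hzeros]
  omega

theorem adjugate_eq_zero_iff_rank_add_two_le (A : Matrix n n K) :
    adjugate A = 0 ↔ A.rank + 2 ≤ Fintype.card n := by
  obtain ⟨L, L', d, rfl⟩ := Pivot.exists_list_transvec_mul_diagonal_mul_list_transvec A
  have hdet (L : List (TransvectionStruct n K)) :
      IsUnit (L.map TransvectionStruct.toMatrix).prod.det := by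
    simp [TransvectionStruct.det_toMatrix_prod]
  have hadj (L : List (TransvectionStruct n K)) :
      IsUnit (L.map TransvectionStruct.toMatrix).prod.adjugate := by
    rw [isUnit_iff_isUnit_det, det_adjugate]
    exact (hdet L).pow _
  rw [rank_mul_eq_left_of_isUnit_det _ _ (hdet L'), rank_mul_eq_right_of_isUnit_det _ _ (hdet L),
    adjugate_mul_distrib, adjugate_mul_distrib, ← Matrix.mul_assoc, (hadj L).mul_left_eq_zero,
    (hadj L').mul_right_eq_zero, adjugate_diagonal_eq_zero_iff]

end Matrix

namespace Derivation

variable {R A M : Type*} [CommSemiring R] [CommRing A] [Algebra R A] [AddCommGroup M]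
  [Module A M] [Module R M] (D : Derivation R A M)

theorem leibniz_prod {ι : Type*} [DecidableEq ι] (s : Finset ι) (f : ι → A) :
    D (∏ i ∈ s, f i) = ∑ i ∈ s, (∏ j ∈ s.erase i, f j) • D (f i) := by
  induction s using Finset.induction_on with
  | empty => simp
  | insert a s ha ih =>
    rw [prod_insert ha, leibniz, ih, sum_insert ha, erase_insert ha, smul_sum, add_comm]
    congr 1
    refine sum_congr rfl fun i hi => ?_
    rw [erase_insert_of_ne (ne_of_mem_of_not_mem hi ha).symm,
      prod_insert fun h => ha (mem_of_mem_erase h), mul_smul]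

end Derivation

theorem Derivation.map_det {R A n : Type*} [CommSemiring R] [CommRing A] [Algebra R A]
    [Fintype n] [DecidableEq n] (D : Derivation R A A) (B : Matrix n n A) :
    D B.det = ∑ i, ∑ j, B.adjugate i j * D (B j i) := by
  -- Leibniz on each term of the permutation expansion differentiates one column at a time;
  -- the determinant with column `i` differentiated is then read off by Cramer's rule.
  have hcol : ∀ i, (B.updateCol i fun r => D (B r i)).det = ∑ j, B.adjugate i j * D (B j i) :=
    fun i => by rw [← cramer_apply, cramer_eq_adjugate_mulVec]; rfl
  simp_rw [← hcol, det_apply, map_sum, Units.smul_def, map_zsmul, leibniz_prod, smul_eq_mul,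
    smul_sum]
  rw [sum_comm]
  refine sum_congr rfl fun i _ => sum_congr rfl fun σ _ => ?_
  rw [← mul_prod_erase _ _ (mem_univ i), updateCol_self, mul_comm]
  congr 2
  exact prod_congr rfl fun j hj => (updateCol_ne (ne_of_mem_erase hj)).symm

section

variable {ι R : Type*} [LinearOrder ι] [CommRing R]

variable (ι) in
def symIndex (i j : ι) : {p : ι × ι // p.1 ≤ p.2} :=
  if h : i ≤ j then ⟨(i, j), h⟩ else ⟨(j, i), le_of_not_ge h⟩

variable (ι R) in
noncomputable def genericSymmetricMatrix :
    Matrix ι ι (MvPolynomial {p : ι × ι // p.1 ≤ p.2} R) :=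
  of fun i j => X (symIndex ι i j)

theorem symIndex_eq_mk_iff {i j a b : ι} (hab : a ≤ b) :
    symIndex ι i j = ⟨(a, b), hab⟩ ↔ i = a ∧ j = b ∨ i = b ∧ j = a := by
  unfold symIndex
  split_ifs with h <;> simp only [Subtype.mk.injEq, Prod.mk.injEq] <;> grind

theorem map_eval_genericSymmetricMatrix {M : Matrix ι ι R} (hM : M.IsSymm) :
    (genericSymmetricMatrix ι R).map (eval fun q => M q.1.1 q.1.2) = M := by
  ext i j
  simp only [genericSymmetricMatrix, symIndex, map_apply, of_apply]
  split_ifs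
  · simp
  · simp [hM.apply i j]

variable [Fintype ι]

theorem sum_sum_ite_symIndex_eq (N : Matrix ι ι R) {a b : ι} (hab : a ≤ b) :
    ∑ i, ∑ j, (if symIndex ι j i = ⟨(a, b), hab⟩ then N i j else 0) =
      if a = b then N a a else N a b + N b a := by
  simp only [symIndex_eq_mk_iff]
  split_ifs with h
  · subst h; simp [and_comm, ite_and]
  · have hsplit : ∀ i j, (if j = a ∧ i = b ∨ j = b ∧ i = a then N i j else 0) =
        (if j = a ∧ i = b then N i j else 0) + (if j = b ∧ i = a then N i j else 0) := by
      intro i j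
      split_ifs <;> grind
    simp [hsplit, sum_add_distrib, ite_and, add_comm]

theorem eval_pderiv_det_genericSymmetricMatrix {M : Matrix ι ι R} (hM : M.IsSymm)
    (s : {p : ι × ι // p.1 ≤ p.2}) :
    eval (fun q : {p : ι × ι // p.1 ≤ p.2} => M q.1.1 q.1.2)
        (pderiv s (genericSymmetricMatrix ι R).det) =
      ∑ i, ∑ j, if symIndex ι j i = s then M.adjugate i j else 0 := by
  have hadj := RingHom.map_adjugate (eval fun q => M q.1.1 q.1.2) (genericSymmetricMatrix ι R)
  rw [RingHom.mapMatrix_apply, RingHom.mapMatrix_apply, map_eval_genericSymmetricMatrix hM] at hadj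
  simp only [Derivation.map_det, map_sum, map_mul, ← hadj, map_apply]
  simp only [genericSymmetricMatrix, of_apply, pderiv_X, Pi.single_apply, apply_ite, map_one,
    map_zero, mul_one, mul_zero]

theorem forall_eval_pderiv_det_genericSymmetricMatrix_eq_zero_iff [NoZeroDivisors R]
    (h2 : (2 : R) ≠ 0) {M : Matrix ι ι R} (hM : M.IsSymm) :
    (∀ s, eval (fun q : {p : ι × ι // p.1 ≤ p.2} => M q.1.1 q.1.2)
        (pderiv s (genericSymmetricMatrix ι R).det) = 0) ↔ M.adjugate = 0 := by
  simp only [eval_pderiv_det_genericSymmetricMatrix hM]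
  refine ⟨fun h => ?_, fun h s => by simp [h]⟩
  have hadj : M.adjugate.IsSymm := by rw [IsSymm, adjugate_transpose, hM.eq]
  have hle : ∀ a b, a ≤ b → M.adjugate a b = 0 := by
    intro a b hab
    have hab' := h ⟨(a, b), hab⟩
    rw [sum_sum_ite_symIndex_eq] at hab'
    split_ifs at hab' with heq
    · rwa [← heq]
    · rwa [hadj.apply a b, ← two_mul, mul_eq_zero, or_iff_right h2] at hab'
  ext a b
  rcases le_total a b with hab | hab
  · exact hle a b hab
  · rw [← hadj.apply a b]
    exact hle b a hab

end

theorem genSymDet_eq_det_genericSymmetricMatrix (k : Type*) [Field k] :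
    genSymDet k = (genericSymmetricMatrix (Fin 4) k).det := by
  unfold genSymDet genericSymmetricMatrix symIndex
  congr
  ext i j
  split_ifs <;> rfl

theorem stmt7_general {k : Type*} [Field k] (hchar : (2 : k) ≠ 0)
    (M : Matrix (Fin 4) (Fin 4) k) (hsym : M.IsSymm) :
    (∀ s : {p : Fin 4 × Fin 4 // p.1 ≤ p.2},
        MvPolynomial.eval (fun q : {p : Fin 4 × Fin 4 // p.1 ≤ p.2} => M q.1.1 q.1.2)
          (MvPolynomial.pderiv s (genSymDet k)) = 0)
      ↔ M.rank ≤ 2 := by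
  rw [genSymDet_eq_det_genericSymmetricMatrix,
    forall_eval_pderiv_det_genericSymmetricMatrix_eq_zero_iff hchar hsym,
    adjugate_eq_zero_iff_rank_add_two_le, Fintype.card_fin]
  omega

/-- Over an algebraically closed field of characteristic ≠ 2, a point of the
hypersurface D = 0 corresponding to a nonzero symmetric matrix M is a singular point
(all partial derivatives of D vanish at M) iff M has rank at most 2. -/
theorem stmt7 {k : Type*} [Field k] [IsAlgClosed k] (hchar : (2 : k) ≠ 0)
    (M : Matrix (Fin 4) (Fin 4) k) (hsym : M.IsSymm) (hM : M ≠ 0) (hdet : M.det = 0) :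
    (∀ s : {p : Fin 4 × Fin 4 // p.1 ≤ p.2},
        MvPolynomial.eval (fun q : {p : Fin 4 × Fin 4 // p.1 ≤ p.2} => M q.1.1 q.1.2)
          (MvPolynomial.pderiv s (genSymDet k)) = 0)
      ↔ M.rank ≤ 2 :=
  stmt7_general hchar M hsym
end

section
/- Let k be a field. The common zero locus in P³ of the two quadrics q₁ = T₁² − T₀T₂ and q₂ = T₂² − T₀T₃ is exactly the image of the map P¹ → P³ given by (s : t) ↦ (s⁴ : s³t : s²t² : t⁴). -/
/-! A point off the hyperplane `T₀ = 0` can be scaled to `T₀ = 1`; then `q₁ = 0` forces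
`T₂ = T₁²` and `q₂ = 0` forces `T₃ = T₂² = T₁⁴`, which is the image of `(1 : T₁)`.
On the hyperplane `T₀ = 0` the quadrics force `T₁ = T₂ = 0`, so the only point is
`(0 : 0 : 0 : 1)`, the image of `(0 : 1)`. -/

def quarticCurvePoint {R : Type*} [CommRing R] (s t : R) : Fin 4 → R :=
  ![s ^ 4, s ^ 3 * t, s ^ 2 * t ^ 2, t ^ 4]

theorem quadrics_eq_zero_of_eq_smul_quarticCurvePoint {R : Type*} [CommRing R]
    {v : Fin 4 → R} {s t c : R} (hv : v = c • quarticCurvePoint s t) :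
    v 1 ^ 2 - v 0 * v 2 = 0 ∧ v 2 ^ 2 - v 0 * v 3 = 0 := by
  subst hv
  constructor <;> simp [quarticCurvePoint] <;> ring

theorem eq_smul_quarticCurvePoint_zero_one {R : Type*} [CommRing R] [IsReduced R]
    {v : Fin 4 → R} (h0 : v 0 = 0)
    (h1 : v 1 ^ 2 - v 0 * v 2 = 0) (h2 : v 2 ^ 2 - v 0 * v 3 = 0) :
    v = v 3 • quarticCurvePoint 0 1 := by
  have hv1 : v 1 = 0 := IsReduced.eq_zero _ ⟨2, by linear_combination h1 + v 2 * h0⟩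
  have hv2 : v 2 = 0 := IsReduced.eq_zero _ ⟨2, by linear_combination h2 + v 3 * h0⟩
  ext i
  fin_cases i <;> simp [quarticCurvePoint, h0, hv1, hv2]

theorem eq_smul_quarticCurvePoint_one_div {k : Type*} [Field k]
    {v : Fin 4 → k} (h0 : v 0 ≠ 0)
    (h1 : v 1 ^ 2 - v 0 * v 2 = 0) (h2 : v 2 ^ 2 - v 0 * v 3 = 0) :
    v = v 0 • quarticCurvePoint 1 (v 1 / v 0) := by
  ext i
  fin_cases i <;> simp [quarticCurvePoint] <;> field_simp
  · linear_combination -h1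
  · linear_combination (-(v 1 ^ 2 + v 0 * v 2)) * h1 - v 0 ^ 2 * h2

/-- The common zero locus in P³ of q₁ = T₁² − T₀T₂ and q₂ = T₂² − T₀T₃ is
exactly the image of P¹ → P³, (s : t) ↦ (s⁴ : s³t : s²t² : t⁴): stated on nonzero
representative vectors up to scalar. -/
theorem stmt10 {k : Type*} [Field k] (v : Fin 4 → k) (hv : v ≠ 0) :
    (v 1 ^ 2 - v 0 * v 2 = 0 ∧ v 2 ^ 2 - v 0 * v 3 = 0) ↔
      ∃ s t c : k, c ≠ 0 ∧ v = c • ![s ^ 4, s ^ 3 * t, s ^ 2 * t ^ 2, t ^ 4] := by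
  constructor
  · rintro ⟨h1, h2⟩
    by_cases h0 : v 0 = 0
    · have hv_eq := eq_smul_quarticCurvePoint_zero_one h0 h1 h2
      refine ⟨0, 1, v 3, fun h3 => hv ?_, hv_eq⟩
      rw [hv_eq, h3, zero_smul]
    · exact ⟨1, v 1 / v 0, v 0, h0, eq_smul_quarticCurvePoint_one_div h0 h1 h2⟩
  · rintro ⟨s, t, c, -, hv_eq⟩
    exact quadrics_eq_zero_of_eq_smul_quarticCurvePoint hv_eq
end

section
/- Let k be a field and let C ⊂ P³ be the curve parametrised by (s : t) ↦ (s⁴ : s³t : s²t² : t⁴). A quadratic form q in T₀, T₁, T₂, T₃ vanishes identically on C if and only if q is a k-linear combination of T₁² − T₀T₂ and T₂² − T₀T₃. -/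
/-!
Substituting monomials for the variables maps every monomial to a monomial: `T^m` goes to
`s^(8 - w m) t^(w m)` with `w m = m₁ + 2 m₂ + 4 m₃` when `m` has degree 2. On quadratic
monomials `w` is injective except for the collisions `T₁² ~ T₀T₂` and `T₂² ~ T₀T₃`, which are
exactly the two quadrics. Subtracting suitable multiples of them from `q` clears the coefficients
of `T₁²` and `T₂²`; the remainder is supported where the substitution is injective on monomials,
so no cancellation can occur and it vanishes on the curve only if it is zero.
-/

open MvPolynomial
open Finsupp (single linearCombination)

theorem Finsupp.apply_ne_of_degree_eq_of_ne_single {σ : Type*} [Fintype σ] {m : σ →₀ ℕ} {n : ℕ}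
    {i : σ} (hm : m.degree = n) (hne : m ≠ single i n) : m i ≠ n := by
  classical
  intro hi
  refine hne (Finsupp.ext fun j => ?_)
  rcases eq_or_ne j i with rfl | hj
  · rw [single_eq_same, hi]
  · have hle := Finset.sum_le_sum_of_subset (f := m) (Finset.subset_univ {i, j})
    rw [Finset.sum_pair hj.symm, ← degree_eq_sum] at hle
    rw [single_eq_of_ne hj]
    omega

namespace MvPolynomial

variable {σ τ R : Type*} [CommSemiring R]

theorem aeval_monomial_monomial_one (v : σ → τ →₀ ℕ) (m : σ →₀ ℕ) (r : R) :
    aeval (fun i => monomial (v i) (1 : R)) (monomial m r) =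
      monomial (linearCombination ℕ v m) r := by
  rw [aeval_monomial, Finsupp.linearCombination_apply, monomial_finsupp_sum_index, C_mul',
    algebraMap_eq, smul_eq_C_mul]
  simp only [monomial_pow, one_pow]

theorem coeff_aeval_monomial_of_injOn {v : σ → τ →₀ ℕ} {p : MvPolynomial σ R}
    (hinj : Set.InjOn (linearCombination ℕ v) p.support) {m : σ →₀ ℕ} (hm : m ∈ p.support) :
    coeff (linearCombination ℕ v m) (aeval (fun i => monomial (v i) (1 : R)) p) = coeff m p := by
  classical
  conv_lhs => rw [p.as_sum]
  rw [map_sum, coeff_sum, Finset.sum_eq_single m]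
  · rw [aeval_monomial_monomial_one, coeff_monomial, if_pos rfl]
  · intro m' hm' hne
    rw [aeval_monomial_monomial_one, coeff_monomial, if_neg fun h => hne (hinj hm' hm h)]
  · exact fun h => absurd hm h

theorem eq_zero_of_aeval_monomial_eq_zero {v : σ → τ →₀ ℕ} {p : MvPolynomial σ R}
    (hinj : Set.InjOn (linearCombination ℕ v) p.support)
    (h : aeval (fun i => monomial (v i) (1 : R)) p = 0) : p = 0 := by
  by_contra hp
  obtain ⟨m, hm⟩ := support_nonempty.mpr hp
  have hcoeff := coeff_aeval_monomial_of_injOn hinj hm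
  rw [h, coeff_zero, eq_comm] at hcoeff
  exact mem_support_iff.mp hm hcoeff

end MvPolynomial

noncomputable def curveExponent : Fin 4 → Fin 2 →₀ ℕ :=
  ![single 0 4, single 0 3 + single 1 1, single 0 2 + single 1 2, single 1 4]

theorem monomial_curveExponent (k : Type*) [CommSemiring k] :
    (fun i => monomial (curveExponent i) (1 : k)) =
      ![(X 0) ^ 4, (X 0) ^ 3 * X 1, (X 0) ^ 2 * (X 1) ^ 2, (X 1) ^ 4] := by
  funext i
  fin_cases i <;> simp [curveExponent, X, monomial_pow, monomial_mul]

theorem linearCombination_curveExponent_apply_one (m : Fin 4 →₀ ℕ) :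
    linearCombination ℕ curveExponent m 1 = m 1 + 2 * m 2 + 4 * m 3 := by
  simp [Finsupp.linearCombination_apply, Finsupp.sum_fintype, Fin.sum_univ_four, curveExponent,
    mul_comm]

theorem linearCombination_curveExponent_injOn :
    Set.InjOn (linearCombination ℕ curveExponent)
      ({m | m.degree = 2} \ {single 1 2, single 2 2}) := by
  rintro m ⟨hm, hm_ne⟩ m' ⟨hm', hm'_ne⟩ h
  simp only [Set.mem_insert_iff, Set.mem_singleton_iff, not_or] at hm_ne hm'_ne
  have := Finsupp.apply_ne_of_degree_eq_of_ne_single hm hm_ne.1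
  have := Finsupp.apply_ne_of_degree_eq_of_ne_single hm hm_ne.2
  have := Finsupp.apply_ne_of_degree_eq_of_ne_single hm' hm'_ne.1
  have := Finsupp.apply_ne_of_degree_eq_of_ne_single hm' hm'_ne.2
  have hw := DFunLike.congr_fun h 1
  rw [linearCombination_curveExponent_apply_one, linearCombination_curveExponent_apply_one] at hw
  rw [Set.mem_ofPred_eq, Finsupp.degree_eq_sum, Fin.sum_univ_four] at hm hm'
  ext i
  fin_cases i <;> dsimp <;> omega

theorem aeval_curve_quadrics {k : Type*} [CommRing k] (a b : k) :
    aeval (![(X 0) ^ 4, (X 0) ^ 3 * X 1, (X 0) ^ 2 * (X 1) ^ 2, (X 1) ^ 4] :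
        Fin 4 → MvPolynomial (Fin 2) k)
      (C a * (X 1 ^ 2 - X 0 * X 2) + C b * (X 2 ^ 2 - X 0 * X 3)) = 0 := by
  simp only [map_add, map_mul, map_sub, map_pow, aeval_X, aeval_C, algebraMap_eq, Matrix.cons_val]
  ring

theorem isHomogeneous_curve_quadrics {k : Type*} [CommRing k] (a b : k) :
    (C a * (X 1 ^ 2 - X 0 * X 2) + C b * (X 2 ^ 2 - X 0 * X 3) :
      MvPolynomial (Fin 4) k).IsHomogeneous 2 :=
  (((isHomogeneous_X_pow 1 2).sub ((isHomogeneous_X k 0).mul (isHomogeneous_X k 2))).C_mul a).add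
    (((isHomogeneous_X_pow 2 2).sub ((isHomogeneous_X k 0).mul (isHomogeneous_X k 3))).C_mul b)

/-- A quadratic form q in T₀,…,T₃ vanishes identically on the curve
(s : t) ↦ (s⁴ : s³t : s²t² : t⁴) iff q is a k-linear combination of T₁² − T₀T₂ and
T₂² − T₀T₃. -/
theorem stmt11 {k : Type*} [Field k] (q : MvPolynomial (Fin 4) k)
    (hq : q.IsHomogeneous 2) :
    (aeval (![(X 0) ^ 4, (X 0) ^ 3 * X 1, (X 0) ^ 2 * (X 1) ^ 2, (X 1) ^ 4] :
        Fin 4 → MvPolynomial (Fin 2) k) q = 0) ↔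
      ∃ a b : k, q = C a * (X 1 ^ 2 - X 0 * X 2) + C b * (X 2 ^ 2 - X 0 * X 3) := by
  refine ⟨fun h => ?_, fun ⟨a, b, hab⟩ => hab ▸ aeval_curve_quadrics a b⟩
  set a := coeff (single 1 2) q
  set b := coeff (single 2 2) q
  refine ⟨a, b, sub_eq_zero.mp ?_⟩
  have hr : (q - (C a * (X 1 ^ 2 - X 0 * X 2) + C b * (X 2 ^ 2 - X 0 * X 3))).IsHomogeneous 2 :=
    hq.sub (isHomogeneous_curve_quadrics a b)
  refine eq_zero_of_aeval_monomial_eq_zero (linearCombination_curveExponent_injOn.mono ?_) ?_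
  · intro m hm
    refine ⟨by_contra fun hdeg => mem_support_iff.mp hm (hr.coeff_eq_zero hdeg), ?_⟩
    rintro (rfl | rfl) <;>
      simp [a, b, coeff_X_pow, coeff_X_mul', Finsupp.single_eq_single_iff] at hm
  · rw [monomial_curveExponent, map_sub, h, aeval_curve_quadrics, sub_zero]
end

section
/- Let k be an infinite field and l₀ a finite-dimensional étale (i.e. finite separable, possibly a product of separable field extensions) k-algebra of dimension 8. The set of elements α ∈ l₀ of trace zero that generate l₀ as a k-algebra is nonempty. -/
/-!
An étale algebra over a field is a finite product of finite separable field extensions `K i`.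
Over an infinite field each `K i` has a primitive element, and shifting it by a scalar avoids the
finitely many roots of any given polynomial; so one can choose generators `γ i` with pairwise
coprime minimal polynomials, and then `γ` generates the product by the Chinese remainder theorem.
Subtracting `trace γ / 8` (allowed since `8 ≠ 0` in `k`) then kills the trace without changing the
generated subalgebra.
-/

universe u

open Polynomial Algebra

theorem Algebra.adjoin_singleton_add_algebraMap {R A : Type*} [CommRing R] [Ring A] [Algebra R A]
    (x : A) (c : R) : adjoin R {x + algebraMap R A c} = adjoin R {x} := by
  refine le_antisymm (adjoin_singleton_le ?_) (adjoin_singleton_le ?_)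
  · exact add_mem (self_mem_adjoin_singleton R x) (Subalgebra.algebraMap_mem _ c)
  · simpa using sub_mem (self_mem_adjoin_singleton R (x + algebraMap R A c))
      (Subalgebra.algebraMap_mem _ c)

theorem AlgEquiv.adjoin_singleton_eq_top {R A B : Type*} [CommSemiring R] [Semiring A]
    [Semiring B] [Algebra R A] [Algebra R B] (e : A ≃ₐ[R] B) {x : A}
    (hx : adjoin R {x} = ⊤) : adjoin R {e x} = ⊤ := by
  have := AlgHom.map_adjoin_singleton (e : A →ₐ[R] B) x
  rw [hx, Algebra.map_top, (AlgHom.range_eq_top _).2 e.surjective] at this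
  exact_mod_cast this.symm

theorem Algebra.adjoin_singleton_pi_eq_top {R ι : Type*} [CommSemiring R] [Finite ι]
    {A : ι → Type*} [∀ i, CommSemiring (A i)] [∀ i, Algebra R (A i)] {x : Π i, A i}
    (hx : ∀ i, adjoin R {x i} = ⊤) {p : ι → R[X]} (hp : ∀ i, aeval (x i) (p i) = 0)
    (hcop : Pairwise fun i j ↦ IsCoprime (p i) (p j)) : adjoin R {x} = ⊤ := by
  classical
  have := Fintype.ofFinite ι
  -- Bézout relations between `p j` and the other `p i` put the idempotents into `R[x]`.
  have single_mem (j : ι) : Pi.single j 1 ∈ adjoin R {x} := by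
    obtain ⟨u, v, huv⟩ : IsCoprime (p j) (∏ i ∈ Finset.univ.erase j, p i) :=
      IsCoprime.prod_right fun i hi ↦ hcop (Finset.ne_of_mem_erase hi).symm
    convert aeval_mem_adjoin_singleton R x (p := v * ∏ i ∈ Finset.univ.erase j, p i)
    ext i
    rw [aeval_pi_apply₂]
    by_cases hij : i = j
    · subst hij
      have := congrArg (aeval (x i)) huv
      rw [map_add, map_mul, hp, mul_zero, zero_add, map_one] at this
      rw [this, Pi.single_eq_same]
    · rw [Pi.single_eq_of_ne hij, map_mul, map_prod,
        Finset.prod_eq_zero (Finset.mem_erase.2 ⟨hij, Finset.mem_univ i⟩) (hp i), mul_zero]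
  have hsurj (i : ι) : Function.Surjective (aeval (R := R) (x i)) := by
    rw [← AlgHom.range_eq_top, ← adjoin_singleton_eq_range_aeval, hx i]
  rw [Algebra.eq_top_iff]
  intro y
  choose f hf using fun i ↦ hsurj i (y i)
  have hy : y = ∑ j, Pi.single j 1 * aeval x (f j) := by
    ext i
    rw [Finset.sum_apply, Finset.sum_eq_single_of_mem i (Finset.mem_univ i)
      fun j _ hji ↦ by rw [Pi.mul_apply, Pi.single_eq_of_ne hji.symm, zero_mul]]
    rw [Pi.mul_apply, Pi.single_eq_same, one_mul, aeval_pi_apply₂, hf]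
  rw [hy]
  exact Subalgebra.sum_mem _ fun j _ ↦ mul_mem (single_mem j) (aeval_mem_adjoin_singleton R x)

theorem exists_aeval_add_algebraMap_ne_zero {k A : Type*} [Field k] [Infinite k] [CommRing A]
    [IsDomain A] [Algebra k A] (x : A) {q : k[X]} (hq : q ≠ 0) :
    ∃ c : k, aeval (x + algebraMap k A c) q ≠ 0 := by
  by_contra! h
  refine (finite_setOfPred_isRoot (map_ne_zero (f := algebraMap k A) hq)).not_infinite
    (Set.infinite_of_injective_forall_mem (add_right_injective x |>.comp (algebraMap k A).injective)
      fun c ↦ ?_)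
  simpa [aeval_def, eval_map] using h c

theorem exists_adjoin_eq_top_isCoprime_minpoly (k L : Type*) [Field k] [Infinite k] [Field L]
    [Algebra k L] [FiniteDimensional k L] [Algebra.IsSeparable k L] {q : k[X]} (hq : q ≠ 0) :
    ∃ γ : L, adjoin k {γ} = ⊤ ∧ IsCoprime (minpoly k γ) q := by
  let θ := (Field.powerBasisOfFiniteOfSeparable k L).gen
  obtain ⟨c, hc⟩ := exists_aeval_add_algebraMap_ne_zero θ hq
  refine ⟨θ + algebraMap k L c, ?_, ?_⟩
  · rw [adjoin_singleton_add_algebraMap]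
    exact (Field.powerBasisOfFiniteOfSeparable k L).adjoin_gen_eq_top
  · exact (minpoly.irreducible (.of_finite k _)).coprime_iff_not_dvd.2 (hc ∘ minpoly.dvd_iff.1)

theorem exists_adjoin_eq_top_pairwise_isCoprime_minpoly {k ι : Type*} [Field k] [Infinite k]
    [Finite ι] (K : ι → Type*) [∀ i, Field (K i)] [∀ i, Algebra k (K i)]
    [∀ i, FiniteDimensional k (K i)] [∀ i, Algebra.IsSeparable k (K i)] :
    ∃ γ : Π i, K i, (∀ i, adjoin k {γ i} = ⊤) ∧
      Pairwise fun i j ↦ IsCoprime (minpoly k (γ i)) (minpoly k (γ j)) := by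
  classical
  have := Fintype.ofFinite ι
  suffices ∀ s : Finset ι, ∃ γ : Π i, K i, (∀ i, adjoin k {γ i} = ⊤) ∧
      (s : Set ι).Pairwise fun i j ↦ IsCoprime (minpoly k (γ i)) (minpoly k (γ j)) by
    simpa [Set.pairwise_univ] using this Finset.univ
  intro s
  induction s using Finset.induction_on with
  | empty =>
    choose γ hγ using fun i ↦ exists_adjoin_eq_top_isCoprime_minpoly k (K i) one_ne_zero
    exact ⟨γ, fun i ↦ (hγ i).1, by simp⟩
  | insert a s ha ih =>
    obtain ⟨γ, hgen, hpair⟩ := ih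
    obtain ⟨γa, hγa, hcop⟩ := exists_adjoin_eq_top_isCoprime_minpoly k (K a)
      (q := ∏ i ∈ s, minpoly k (γ i))
      (Finset.prod_ne_zero_iff.2 fun i _ ↦ minpoly.ne_zero (.of_finite k (γ i)))
    have update_of_mem {i} (hi : i ∈ s) : Function.update γ a γa i = γ i :=
      Function.update_of_ne (ne_of_mem_of_not_mem hi ha) _ _
    refine ⟨Function.update γ a γa, fun i ↦ ?_, ?_⟩
    · by_cases hi : i = a
      · subst hi
        simpa using hγa
      · simpa [Function.update_of_ne hi] using hgen i
    · rw [Finset.coe_insert, Set.pairwise_insert_of_symm]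
      refine ⟨fun i hi j hj hij ↦ ?_, fun i hi _ ↦ ?_⟩
      · dsimp only
        rw [update_of_mem hi, update_of_mem hj]
        exact hpair hi hj hij
      · rw [update_of_mem hi, Function.update_self]
        exact hcop.of_isCoprime_of_dvd_right (Finset.dvd_prod_of_mem _ hi)

theorem exists_trace_eq_zero_adjoin_eq_top {R A : Type*} [CommRing R] [StrongRankCondition R]
    [CommRing A] [Algebra R A] [Module.Free R A] (hn : IsUnit (Module.finrank R A : R)) {α : A}
    (hα : adjoin R {α} = ⊤) : ∃ β : A, trace R A β = 0 ∧ adjoin R {β} = ⊤ := by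
  refine ⟨α + algebraMap R A (-(hn.unit⁻¹ * trace R A α)), ?_, ?_⟩
  · rw [map_add, trace_algebraMap, nsmul_eq_mul, mul_neg, ← mul_assoc, hn.mul_val_inv, one_mul,
      add_neg_cancel]
  · rwa [adjoin_singleton_add_algebraMap]

/-- For an infinite field k (char ≠ 2) and an étale k-algebra l₀ of
dimension 8, there exists a trace-zero element generating l₀ as a k-algebra. -/
theorem stmt13 {k l₀ : Type u} [Field k] [Infinite k] (hchar : (2 : k) ≠ 0)
    [CommRing l₀] [Algebra k l₀] [Algebra.Etale k l₀]
    (hdim : Module.finrank k l₀ = 8) :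
    ∃ α : l₀, Algebra.trace k l₀ α = 0 ∧ Algebra.adjoin k {α} = ⊤ := by
  obtain ⟨I, _, K, _, _, e, hK⟩ := (Algebra.Etale.iff_exists_algEquiv_prod k l₀).1 ‹_›
  have := fun i ↦ (hK i).1
  have := fun i ↦ (hK i).2
  obtain ⟨γ, hgen, hcop⟩ := exists_adjoin_eq_top_pairwise_isCoprime_minpoly (k := k) K
  have hγ : adjoin k {γ} = ⊤ :=
    adjoin_singleton_pi_eq_top hgen (fun i ↦ minpoly.aeval k (γ i)) hcop
  have h8 : (Module.finrank k l₀ : k) ≠ 0 := by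
    rw [hdim, show ((8 : ℕ) : k) = 2 ^ 3 by norm_num]
    exact pow_ne_zero 3 hchar
  exact exists_trace_eq_zero_adjoin_eq_top h8.isUnit (e.symm.adjoin_singleton_eq_top hγ)
end
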